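/- For the complete graph K_n with n ∈ {2,3,4}, M̂_R = (1/n)J if and only if E[cos(nR)] = 1 − n/2; in particular such R exists (e.g., R deterministic equal to π/4 for n=2, 2π/9 for n=3, π/4 for n=4). -/

import Mathlib

open Matrix MeasureTheory Real
open scoped Matrix

/-- The all-ones matrix. -/
def allOnes (n : ℕ) : Matrix (Fin n) (Fin n) ℝ := Matrix.of fun _ _ => 1

/-- The average mixing matrix of the complete graph `K_n` under a sampling
distribution `μ`: `M̂_R = E₀∘E₀ + E₁∘E₁ + 2 E[cos (n R)] • (E₀∘E₁)`, where
`E₀ = (1/n) J` and `E₁ = I - E₀` are the spectral projections and `n` the eigenvalue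
gap of `K_n`. -/
noncomputable def ammK (n : ℕ) (μ : Measure ℝ) : Matrix (Fin n) (Fin n) ℝ :=
  ((1 / n : ℝ) • allOnes n) ⊙ ((1 / n : ℝ) • allOnes n) +
    (1 - (1 / n : ℝ) • allOnes n) ⊙ (1 - (1 / n : ℝ) • allOnes n) +
    (2 * ∫ t, Real.cos (n * t) ∂μ) •
      (((1 / n : ℝ) • allOnes n) ⊙ (1 - (1 / n : ℝ) • allOnes n))

/-! All entries of `M̂_R` off the diagonal equal `2 (1 - E[cos (n R)]) / n²`, so `M̂_R = J / n`
forces `E[cos (n R)] = 1 - n / 2`, and conversely this value also makes the diagonal entry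
`1 / n`. For `n ≤ 4` the value `1 - n / 2` lies in `[-1, 1]`, so it is attained by `cos (n t)`
at a single time `t`. -/

section ammK

variable {n : ℕ} (μ : Measure ℝ)

theorem ammK_apply_of_ne {i j : Fin n} (hij : i ≠ j) :
    ammK n μ i j = 2 * (1 - ∫ t, Real.cos (n * t) ∂μ) / n ^ 2 := by
  simp only [ammK, allOnes, Matrix.add_apply, Matrix.smul_apply, hadamard_apply, Matrix.sub_apply,
    of_apply, one_apply_ne hij, smul_eq_mul]
  ring

theorem ammK_apply_self (i : Fin n) :
    ammK n μ i i =
      (1 + (n - 1) ^ 2 + 2 * (∫ t, Real.cos (n * t) ∂μ) * (n - 1)) / n ^ 2 := by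
  have hn : (n : ℝ) ≠ 0 := Nat.cast_ne_zero.mpr (Fin.pos i).ne'
  simp only [ammK, allOnes, Matrix.add_apply, Matrix.smul_apply, hadamard_apply, Matrix.sub_apply,
    of_apply, one_apply_eq, smul_eq_mul]
  field_simp

theorem ammK_eq_smul_allOnes_iff (hn : 2 ≤ n) :
    ammK n μ = (1 / n : ℝ) • allOnes n ↔ ∫ t, Real.cos (n * t) ∂μ = 1 - n / 2 := by
  have hn0 : (n : ℝ) ≠ 0 := by positivity
  have uniform_apply (i j : Fin n) : ((1 / n : ℝ) • allOnes n) i j = 1 / n := by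
    simp [allOnes]
  constructor
  · intro h
    have h01 := congrFun₂ h ⟨0, by omega⟩ ⟨1, by omega⟩
    rw [ammK_apply_of_ne μ (by simp), uniform_apply] at h01
    field_simp at h01
    linarith
  · intro hc
    ext i j
    rw [uniform_apply]
    rcases eq_or_ne i j with rfl | hij
    · rw [ammK_apply_self, hc]
      field_simp
      ring
    · rw [ammK_apply_of_ne μ hij, hc]
      field_simp
      ring

end ammK

theorem cos_mul_eq_one_sub_half {n : ℕ} (hn : n = 2 ∨ n = 3 ∨ n = 4) :
    Real.cos (n * if n = 3 then 2 * π / 9 else π / 4) = 1 - n / 2 := by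
  rcases hn with rfl | rfl | rfl <;> norm_num
  · rw [show (2 : ℝ) * (π / 4) = π / 2 by ring, cos_pi_div_two]
  · rw [show (3 : ℝ) * (2 * π / 9) = π - π / 3 by ring, cos_pi_sub, cos_pi_div_three]
  · rw [show (4 : ℝ) * (π / 4) = π by ring, cos_pi]

/-- for `K_n` with `n ∈ {2,3,4}`, `M̂_R = (1/n) J` iff
`E[cos (n R)] = 1 - n/2`; in particular such an `R` exists, e.g. the deterministic
(Dirac) distribution at time `π/4` for `n = 2`, `2π/9` for `n = 3`, `π/4` for `n = 4`. -/
theorem uniform_average_mixing_completeGraph_small {n : ℕ}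
    (hn : n = 2 ∨ n = 3 ∨ n = 4) :
    (∀ μ : Measure ℝ, IsProbabilityMeasure μ →
      (ammK n μ = (1 / n : ℝ) • allOnes n ↔
        ∫ t, Real.cos (n * t) ∂μ = 1 - n / 2)) ∧
    ammK n (Measure.dirac (if n = 3 then 2 * π / 9 else π / 4)) =
      (1 / n : ℝ) • allOnes n := by
  have hn2 : 2 ≤ n := by omega
  refine ⟨fun μ _ => ammK_eq_smul_allOnes_iff μ hn2, ?_⟩
  rw [ammK_eq_smul_allOnes_iff _ hn2, integral_dirac]
  exact cos_mul_eq_one_sub_half hn
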